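/- Let S > 0 and r > 0 with S < 4r. Then there exists a real number α > √S such that 2α²/r > 1 and, for every x with 1/2 ≤ x < 1, the inequality (2x−1)·|(1 − 2α²/r)·x + 2α²/r| < α²/S holds. -/

import Mathlib

/-!
With `B = 2α²/r`, the quantity `(2x - 1)((1 - B)x + B)` equals `(2x - 1)x + B(2x - 1)(1 - x)`, which
stays below `1 + B/8` on `[1/2, 1)`. Writing `A = α²`, the bound `1 + A/(4r) ≤ A/S` amounts to
`A ≥ 4rS/(4r - S)`, which is where `S < 4r` enters; `A = r/2 + 4rS/(4r - S)` also gives `A > S`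
and `B > 1`.
-/

open Real

lemma two_mul_sub_one_mul_le_one_div_eight (x : ℝ) : (2 * x - 1) * (1 - x) ≤ 1 / 8 := by
  nlinarith [sq_nonneg (4 * x - 3)]

lemma two_mul_sub_one_mul_abs_lt {B x : ℝ} (hB : 0 ≤ B) (hx : 1 / 2 ≤ x) (hx1 : x < 1) :
    (2 * x - 1) * |(1 - B) * x + B| < 1 + B / 8 := by
  have hsplit : (1 - B) * x + B = x + B * (1 - x) := by ring
  have hnonneg : 0 ≤ x + B * (1 - x) := by nlinarith
  have hquad : (2 * x - 1) * x < 1 := by nlinarith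
  have hbump := mul_le_mul_of_nonneg_left (two_mul_sub_one_mul_le_one_div_eight x) hB
  rw [hsplit, abs_of_nonneg hnonneg]
  nlinarith

theorem barrier_inequality (S r : ℝ) (hS : 0 < S) (hr : 0 < r) (hSr : S < 4 * r) :
    ∃ α : ℝ, Real.sqrt S < α ∧ 1 < 2 * α ^ 2 / r ∧
      ∀ x : ℝ, 1 / 2 ≤ x → x < 1 →
        (2 * x - 1) * |(1 - 2 * α ^ 2 / r) * x + 2 * α ^ 2 / r| < α ^ 2 / S := by
  have hgap : 0 < 4 * r - S := by linarith
  set A := r / 2 + 4 * r * S / (4 * r - S) with hA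
  have hS_lt : S < 4 * r * S / (4 * r - S) := by
    rw [lt_div_iff₀ hgap]
    nlinarith
  have hSA : S < A := by linarith
  have hrA : 1 < 2 * A / r := by
    rw [lt_div_iff₀ hr]
    linarith
  have hmargin : A / S - (1 + 2 * A / r / 8) = (4 * r - S) / (8 * S) := by
    rw [hA]
    -- `field_simp` only cancels `(4r - S)/(4r - S)` once `4r - S` is an atom
    generalize hc : 4 * r - S = c at hgap
    field_simp
    rw [← hc]
    ring
  have hαsq : Real.sqrt A ^ 2 = A := Real.sq_sqrt (by linarith)
  refine ⟨Real.sqrt A, Real.sqrt_lt_sqrt hS.le hSA, by rwa [hαsq], fun x hx hx1 => ?_⟩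
  rw [hαsq]
  calc (2 * x - 1) * |(1 - 2 * A / r) * x + 2 * A / r|
      < 1 + 2 * A / r / 8 := two_mul_sub_one_mul_abs_lt (by linarith) hx hx1
    _ < A / S := by linarith [div_pos hgap (by positivity : (0 : ℝ) < 8 * S)]
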